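/- arXiv:1707.09579 — 3 statements merged into one kernel-verified Lean document; each statement's English description precedes it below -/
import Mathlib

section
/- Every tree-child network has exactly one automorphism that fixes its leaf set (namely the identity); consequently, no two distinct vertices and no two distinct edges of a tree-child network are exchanged by any leaf-label-preserving symmetry. -/
/-!
Formalization of rooted binary phylogenetic networks (directed multigraphs with
labelled leaves), tree-child networks, and the SNPR / SNPR+ / SNPR− rearrangement
operations, following Klawitter, "The SNPR neighbourhood of tree-child networks".
-/

noncomputable section

attribute [local instance] Classical.propDecidable

/-- Raw data of a (rooted, binary) phylogenetic network on `n` taxa: a finite vertex set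
(vertices are natural numbers), a multiset of directed edges (parallel edges allowed),
a distinguished root, and an injective labelling of the leaves by `Fin n`. -/
structure RawNet (n : ℕ) where
  V : Finset ℕ
  E : Multiset (ℕ × ℕ)
  root : ℕ
  leaf : Fin n → ℕ

namespace RawNet

variable {n : ℕ}

/-- Adjacency: there is an edge from `a` to `b`. -/
def Adj (N : RawNet n) (a b : ℕ) : Prop := (a, b) ∈ N.E

/-- In-degree of a vertex (counting parallel edges). -/
def inDeg (N : RawNet n) (v : ℕ) : ℕ := (N.E.filter (fun e => e.2 = v)).card

/-- Out-degree of a vertex (counting parallel edges). -/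
def outDeg (N : RawNet n) (v : ℕ) : ℕ := (N.E.filter (fun e => e.1 = v)).card

/-- `v` is a reticulation (in-degree two). -/
def IsRet (N : RawNet n) (v : ℕ) : Prop := N.inDeg v = 2

/-- Edge `g` is a descendant of edge `e`: `g` starts at the head of `e` or at a vertex
reachable from the head of `e` by a directed path. -/
def EdgeDesc (N : RawNet n) (e g : ℕ × ℕ) : Prop :=
  g.1 = e.2 ∨ Relation.TransGen N.Adj e.2 g.1

/-- `δ(e)`: the number of descendant edges of `e`. -/
def delta (N : RawNet n) (e : ℕ × ℕ) : ℕ :=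
  (N.E.filter (fun g => N.EdgeDesc e g)).card

/-- `δ_T(e)`: the number of descendant tree edges of `e`. -/
def deltaT (N : RawNet n) (e : ℕ × ℕ) : ℕ :=
  (N.E.filter (fun g => N.EdgeDesc e g ∧ ¬ N.IsRet g.2)).card

/-- `N` is a valid rooted binary phylogenetic network: a DAG whose root has in-degree 0 and
out-degree 1, whose `n` leaves (in-degree 1, out-degree 0) are bijectively labelled, and all
of whose other vertices are inner tree vertices (in 1, out 2) or reticulations (in 2, out 1). -/
structure IsPhylo (N : RawNet n) : Prop where
  edge_mem : ∀ e ∈ N.E, e.1 ∈ N.V ∧ e.2 ∈ N.V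
  acyclic : ∀ v, ¬ Relation.TransGen N.Adj v v
  root_mem : N.root ∈ N.V
  root_in : N.inDeg N.root = 0
  root_out : N.outDeg N.root = 1
  leaf_mem : ∀ i, N.leaf i ∈ N.V
  leaf_inj : Function.Injective N.leaf
  leaf_in : ∀ i, N.inDeg (N.leaf i) = 1
  leaf_out : ∀ i, N.outDeg (N.leaf i) = 0
  classify : ∀ v ∈ N.V, v = N.root ∨ (∃ i, v = N.leaf i) ∨
    (N.inDeg v = 1 ∧ N.outDeg v = 2) ∨ (N.inDeg v = 2 ∧ N.outDeg v = 1)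

/-- Tree-child: every non-leaf vertex has a child that is a tree vertex. -/
def TreeChild (N : RawNet n) : Prop :=
  ∀ v ∈ N.V, 1 ≤ N.outDeg v → ∃ w, (v, w) ∈ N.E ∧ ¬ N.IsRet w

/-- Isomorphism of networks fixing the labelled leaves (and the root). -/
def Iso (A B : RawNet n) : Prop :=
  ∃ φ : ℕ → ℕ, Set.BijOn φ ↑A.V ↑B.V ∧
    B.E = A.E.map (fun p => (φ p.1, φ p.2)) ∧
    φ A.root = B.root ∧ ∀ i, φ (A.leaf i) = B.leaf i

/-- The network resulting from the SNPR operation that prunes the edge `(u,v)` (where `u` has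
parent edge `(a,u)` and sibling edge `(u,w)`) and regrafts it to the edge `(x,y)`, using the
fresh vertex `u''` to subdivide the regraft edge.  If the regraft edge is the parent or
sibling edge of `u`, it has become the edge `(a,w)` after suppressing `u`. -/
def snprResult (N : RawNet n) (u v a w x y u'' : ℕ) : RawNet n :=
  let E1 : Multiset (ℕ × ℕ) := (((N.E.erase (u, v)).erase (a, u)).erase (u, w)) + {(a, w)}
  let f : ℕ × ℕ := if (x, y) = (a, u) ∨ (x, y) = (u, w) then (a, w) else (x, y)
  { V := insert u'' (N.V.erase u)
    E := (E1.erase f) + {(f.1, u''), (u'', f.2), (u'', v)}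
    root := N.root
    leaf := N.leaf }

/-- The network resulting from the SNPR+ operation `(e,f)`: subdivide `f` with `u'` and `e`
with `v'` and add the edge `(u',v')`; if `e = f`, subdivide `e` twice (with `u'` the parent
of `v'`) and add the (parallel) edge `(u',v')`. -/
def snprPlusResult (N : RawNet n) (e f : ℕ × ℕ) (u' v' : ℕ) : RawNet n :=
  if e = f then
    { V := insert u' (insert v' N.V)
      E := (N.E.erase e) + {(e.1, u'), (u', v'), (u', v'), (v', e.2)}
      root := N.root
      leaf := N.leaf }
  else
    { V := insert u' (insert v' N.V)
      E := ((N.E.erase e).erase f) + {(e.1, v'), (v', e.2), (f.1, u'), (u', f.2), (u', v')}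
      root := N.root
      leaf := N.leaf }

/-- The network resulting from the SNPR− operation deleting the reticulation edge `(u,v)`
and suppressing `u` and `v`; here `(a,u)` is the parent edge of `u`, `(u,w)` the other child
edge of `u`, `(c,v)` the other parent edge of `v`, and `(v,z)` the child edge of `v`.
(If `(u,v)` is one of a pair of parallel edges, i.e. `c = u`, suppressing merges into `(a,z)`.) -/
def snprMinusResult (N : RawNet n) (u v a w c z : ℕ) : RawNet n :=
  if u = c then
    { V := (N.V.erase u).erase v
      E := ((((N.E.erase (u, v)).erase (u, v)).erase (a, u)).erase (v, z)) + {(a, z)}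
      root := N.root
      leaf := N.leaf }
  else
    { V := (N.V.erase u).erase v
      E := (((((N.E.erase (u, v)).erase (a, u)).erase (u, w)).erase (c, v)).erase (v, z))
            + {(a, w), (c, z)}
      root := N.root
      leaf := N.leaf }

/-- `(e,f)` is a tree-child respecting SNPR operation on `N` (with `f` an edge other than `e`,
which is expressed by taking `f` from `N.E.erase e` wherever this predicate is used). -/
def SNPRtcCond (N : RawNet n) (e f : ℕ × ℕ) : Prop :=
  N.inDeg e.1 = 1 ∧ ¬ N.EdgeDesc e f ∧
  ∃ a w u'', (a, e.1) ∈ N.E ∧ (e.1, w) ∈ N.E.erase e ∧ u'' ∉ N.V ∧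
    (N.snprResult e.1 e.2 a w f.1 f.2 u'').TreeChild

/-- The number of tree-child respecting SNPR operations on `N`
(operations are pairs of edges, counted with multiplicity). -/
def numSNPRtc (N : RawNet n) : ℕ :=
  (N.E.map (fun e => ((N.E.erase e).filter (fun f => N.SNPRtcCond e f)).card)).sum

/-- `(e,f)` is a trivial tree-child respecting SNPR operation on `N`. -/
def SNPRtrivCond (N : RawNet n) (e f : ℕ × ℕ) : Prop :=
  N.inDeg e.1 = 1 ∧ ¬ N.EdgeDesc e f ∧
  ∃ a w u'', (a, e.1) ∈ N.E ∧ (e.1, w) ∈ N.E.erase e ∧ u'' ∉ N.V ∧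
    (N.snprResult e.1 e.2 a w f.1 f.2 u'').TreeChild ∧
    (N.snprResult e.1 e.2 a w f.1 f.2 u'').Iso N

/-- The number of trivial tree-child respecting SNPR operations on `N`. -/
def numSNPRtcTrivial (N : RawNet n) : ℕ :=
  (N.E.map (fun e => ((N.E.erase e).filter (fun f => N.SNPRtrivCond e f)).card)).sum

/-- `(e,f)` is a tree-child respecting SNPR+ operation on `N`. -/
def SNPRplusTcCond (N : RawNet n) (e f : ℕ × ℕ) : Prop :=
  ¬ N.IsRet e.1 ∧ ¬ N.EdgeDesc e f ∧
  ∃ u' v', u' ∉ N.V ∧ v' ∉ N.V ∧ u' ≠ v' ∧ (N.snprPlusResult e f u' v').TreeChild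

/-- The number of tree-child respecting SNPR+ operations on `N`. -/
def numSNPRplusTc (N : RawNet n) : ℕ :=
  (N.E.map (fun e => (N.E.filter (fun f => N.SNPRplusTcCond e f)).card)).sum

/-- `e` induces a tree-child respecting SNPR− operation on `N`. -/
def SNPRminusTcCond (N : RawNet n) (e : ℕ × ℕ) : Prop :=
  N.IsRet e.2 ∧ ¬ N.IsRet e.1 ∧
  ∃ a w c z, (a, e.1) ∈ N.E ∧ (e.1, w) ∈ N.E.erase e ∧ (c, e.2) ∈ N.E.erase e ∧
    (e.2, z) ∈ N.E ∧ (N.snprMinusResult e.1 e.2 a w c z).TreeChild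

/-- The number of tree-child respecting SNPR− operations on `N`. -/
def numSNPRminusTc (N : RawNet n) : ℕ :=
  (N.E.filter (fun e => N.SNPRminusTcCond e)).card

/-- `M` is the (concrete) result of applying one SNPR operation to `N`. -/
def IsSNPRres (N M : RawNet n) : Prop :=
  ∃ e f a w u'', e ∈ N.E ∧ f ∈ N.E.erase e ∧ N.inDeg e.1 = 1 ∧ ¬ N.EdgeDesc e f ∧
    (a, e.1) ∈ N.E ∧ (e.1, w) ∈ N.E.erase e ∧ u'' ∉ N.V ∧
    M = N.snprResult e.1 e.2 a w f.1 f.2 u''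

/-- `M` is the (concrete) result of applying one SNPR+ operation to `N`. -/
def IsSNPRplusRes (N M : RawNet n) : Prop :=
  ∃ e f u' v', e ∈ N.E ∧ f ∈ N.E ∧ ¬ N.IsRet e.1 ∧ ¬ N.EdgeDesc e f ∧
    u' ∉ N.V ∧ v' ∉ N.V ∧ u' ≠ v' ∧ M = N.snprPlusResult e f u' v'

/-- `M` is the (concrete) result of applying one SNPR− operation to `N`. -/
def IsSNPRminusRes (N M : RawNet n) : Prop :=
  ∃ e a w c z, e ∈ N.E ∧ N.IsRet e.2 ∧ ¬ N.IsRet e.1 ∧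
    (a, e.1) ∈ N.E ∧ (e.1, w) ∈ N.E.erase e ∧ (c, e.2) ∈ N.E.erase e ∧ (e.2, z) ∈ N.E ∧
    M = N.snprMinusResult e.1 e.2 a w c z

/-- `M` is the result of one operation of type SNPR, SNPR+ or SNPR−. -/
def IsAnyRes (N M : RawNet n) : Prop :=
  N.IsSNPRres M ∨ N.IsSNPRplusRes M ∨ N.IsSNPRminusRes M

/-- The neighbourhood of `N` with respect to a one-step result relation `P` — i.e. the set of
tree-child networks, other than `N` itself, obtainable from `N` by exactly one operation,
counted up to leaf-label-preserving isomorphism — has exactly `k` elements. -/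
def NbhdSizeIs (N : RawNet n) (P : RawNet n → RawNet n → Prop) (k : ℕ) : Prop :=
  ∃ L : List (RawNet n), L.length = k ∧ L.Pairwise (fun A B => ¬ A.Iso B) ∧
    (∀ M ∈ L, P N M ∧ M.TreeChild ∧ ¬ M.Iso N) ∧
    (∀ M, P N M → M.TreeChild → ¬ M.Iso N → ∃ M' ∈ L, M.Iso M')

/-- Number of reticulations `r`. -/
def numRet (N : RawNet n) : ℕ := (N.V.filter (fun v => N.IsRet v)).card

/-- `r₁`: number of reticulations whose child is a leaf. -/
def numR1 (N : RawNet n) : ℕ :=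
  (N.V.filter (fun v => N.IsRet v ∧ ∃ w, (v, w) ∈ N.E ∧ N.outDeg w = 0)).card

/-- `r₂`: number of `r₂` structures (a directed path reticulation → `u` → reticulation),
counted by the middle vertex `u`. -/
def numR2 (N : RawNet n) : ℕ :=
  (N.V.filter (fun u => (∃ x, (x, u) ∈ N.E ∧ N.IsRet x) ∧
    ∃ w, (u, w) ∈ N.E ∧ N.IsRet w)).card

/-- `r₃`: number of `r₃` structures (edges `(x,y), (x,u), (u,w)` with `y, w` reticulations),
counted by the middle vertex `u`. -/
def numR3 (N : RawNet n) : ℕ :=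
  (N.V.filter (fun u => (∃ x y, (x, u) ∈ N.E ∧ (x, y) ∈ N.E.erase (x, u) ∧ N.IsRet y) ∧
    ∃ w, (u, w) ∈ N.E ∧ N.IsRet w)).card

/-- `Δ`: number of triangles (edges `(x,u), (u,w), (x,w)`), counted by the middle vertex `u`. -/
def numTri (N : RawNet n) : ℕ :=
  (N.V.filter (fun u => ∃ x w, (x, u) ∈ N.E ∧ (u, w) ∈ N.E ∧ (x, w) ∈ N.E)).card

/-- `Δ*`: number of tree-branching triangles (the second child `v` of the middle vertex `u`
is incident to three pure tree edges). -/
def numTriStar (N : RawNet n) : ℕ :=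
  (N.V.filter (fun u => ∃ x w v, (x, u) ∈ N.E ∧ (u, w) ∈ N.E ∧ (x, w) ∈ N.E ∧
    (u, v) ∈ N.E.erase (u, w) ∧ N.inDeg v = 1 ∧ N.outDeg v = 2 ∧
    ∀ z, (v, z) ∈ N.E → ¬ N.IsRet z)).card

/-- `D`: number of diamonds (edges `(u,v), (u,w), (v,z), (w,z)` with `v ≠ w`),
counted by the top vertex `u`. -/
def numDia (N : RawNet n) : ℕ :=
  (N.V.filter (fun u => ∃ v w z, v ≠ w ∧ (u, v) ∈ N.E ∧ (u, w) ∈ N.E ∧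
    (v, z) ∈ N.E ∧ (w, z) ∈ N.E)).card

/-- `T`: number of trapezoids (edges `(u,v), (v,w), (w,z), (u,z)`) whose outgoing edges at
`v` and `w` are pure tree edges, counted by the top vertex `u`. -/
def numTrap (N : RawNet n) : ℕ :=
  (N.V.filter (fun u => ∃ v w z, (u, v) ∈ N.E ∧ (v, w) ∈ N.E ∧ (w, z) ∈ N.E ∧
    (u, z) ∈ N.E ∧ (∃ v', (v, v') ∈ N.E.erase (v, w) ∧ ¬ N.IsRet v') ∧
    (∃ w', (w, w') ∈ N.E.erase (w, z) ∧ ¬ N.IsRet w'))).card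

/-- `e` is a critical edge: the tree edge from the middle tree vertex of an `r₂` or `r₃`
structure (or triangle) to its second child. -/
def Critical (N : RawNet n) (e : ℕ × ℕ) : Prop :=
  ¬ N.IsRet e.2 ∧ (∃ w, (e.1, w) ∈ N.E ∧ N.IsRet w) ∧
  ((∃ x, (x, e.1) ∈ N.E ∧ N.IsRet x) ∨
   (∃ x y, (x, e.1) ∈ N.E ∧ (x, y) ∈ N.E.erase (x, e.1) ∧ N.IsRet y))

/-- `e` is a pure tree edge (both endpoints are tree vertices and its head is a tree vertex). -/
def PureTree (N : RawNet n) (e : ℕ × ℕ) : Prop := ¬ N.IsRet e.1 ∧ ¬ N.IsRet e.2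

/-- `Σ_{e ∈ E_{T*}} δ(e)`: sum of `δ` over the pure non-critical tree edges. -/
def sumDeltaTstar (N : RawNet n) : ℕ :=
  ((N.E.filter (fun e => N.PureTree e ∧ ¬ N.Critical e)).map (fun e => N.delta e)).sum

/-- `Σ_{e ∈ E_R} δ_T(e)`: sum of `δ_T` over the reticulation edges. -/
def sumDeltaT_R (N : RawNet n) : ℕ :=
  ((N.E.filter (fun e => N.IsRet e.2)).map (fun e => N.deltaT e)).sum

/-- `e` is the bottom side of a triangle. -/
def TriBottom (N : RawNet n) (e : ℕ × ℕ) : Prop := ∃ x, (x, e.1) ∈ N.E ∧ (x, e.2) ∈ N.E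

/-- `Σ_{e ∈ E_Δ} δ_T(e)`: sum of `δ_T` over the bottom sides of triangles. -/
def sumDeltaT_Tri (N : RawNet n) : ℕ :=
  ((N.E.filter (fun e => N.TriBottom e)).map (fun e => N.deltaT e)).sum

/-- `e` is a pure tree edge whose sibling edge is also a pure tree edge. -/
def PSedge (N : RawNet n) (e : ℕ × ℕ) : Prop :=
  N.PureTree e ∧ ∃ w, (e.1, w) ∈ N.E.erase e ∧ ¬ N.IsRet w

/-- `Σ_{e ∈ E_{PS}} δ_T(e)`. -/
def sumDeltaT_PS (N : RawNet n) : ℕ :=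
  ((N.E.filter (fun e => N.PSedge e)).map (fun e => N.deltaT e)).sum

/-- `Σ_{e ∈ E} δ(e)`: sum of `δ` over all edges. -/
def sumDeltaAll (N : RawNet n) : ℕ :=
  (N.E.map (fun e => N.delta e)).sum

/-- Number of pure inner tree edges: edges incident to no reticulation, no leaf,
and not to the root. -/
def numPureInner (N : RawNet n) : ℕ :=
  (N.E.filter (fun e => e.1 ≠ N.root ∧ e.2 ≠ N.root ∧ N.outDeg e.1 ≠ 0 ∧
    N.outDeg e.2 ≠ 0 ∧ ¬ N.IsRet e.1 ∧ ¬ N.IsRet e.2)).card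

/-- The multiset of tree-child respecting SNPR operations `(e,f)` on `N`
(with multiplicity coming from parallel edges). -/
def OpsTCms (N : RawNet n) : Multiset ((ℕ × ℕ) × (ℕ × ℕ)) :=
  N.E.bind (fun e => ((N.E.erase e).filter (fun f => N.SNPRtcCond e f)).map (fun f => (e, f)))

/-- The result of the SNPR operation `θ = (e,f)` on `N` is isomorphic to `M`. -/
def ResultIsoOp (N : RawNet n) (θ : (ℕ × ℕ) × (ℕ × ℕ)) (M : RawNet n) : Prop :=
  ∃ a w u'', (a, θ.1.1) ∈ N.E ∧ (θ.1.1, w) ∈ N.E.erase θ.1 ∧ u'' ∉ N.V ∧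
    (N.snprResult θ.1.1 θ.1.2 a w θ.2.1 θ.2.2 u'').Iso M

/-- `M ≠ N` is obtained from `N` by at least two distinct (redundant) non-trivial
tree-child respecting SNPR operations. -/
def MultiResult (N M : RawNet n) : Prop :=
  ¬ M.Iso N ∧ ∃ θ θ', θ ∈ N.OpsTCms ∧ θ' ∈ N.OpsTCms ∧
    (θ ≠ θ' ∨ 2 ≤ N.OpsTCms.count θ) ∧ N.ResultIsoOp θ M ∧ N.ResultIsoOp θ' M

/-- The number of non-trivial redundant tree-child respecting SNPR operations on `N`. -/
def numNontrivRedundant (N : RawNet n) : ℕ :=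
  (N.OpsTCms.filter (fun θ => ∃ M, N.MultiResult M ∧ N.ResultIsoOp θ M)).card

/-- The number of redundancy sets of non-trivial tree-child respecting SNPR operations on `N`
is `k` (one redundancy set per isomorphism class of networks reached by at least two
redundant non-trivial operations). -/
def NumRedSetsIs (N : RawNet n) (k : ℕ) : Prop :=
  ∃ L : List (RawNet n), L.length = k ∧ L.Pairwise (fun A B => ¬ A.Iso B) ∧
    (∀ M ∈ L, N.MultiResult M) ∧ (∀ M, N.MultiResult M → ∃ M' ∈ L, M.Iso M')

/-- `M` is the result of an NNI operation on the tree `T`: for an inner tree edge `(u,v)`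
(the axis) with sibling edge `(u,s)`, prune an edge `(v,g2)` outgoing from `v`
(whose sibling edge at `v` is `(v,w')`) and regraft it to `(u,s)`. -/
def IsNNIres (T M : RawNet n) : Prop :=
  ∃ u v s g2 w' u'', (u, v) ∈ T.E ∧ (u, s) ∈ T.E.erase (u, v) ∧ T.inDeg u = 1 ∧
    (v, g2) ∈ T.E ∧ (v, w') ∈ T.E.erase (v, g2) ∧ u'' ∉ T.V ∧
    M = T.snprResult v g2 u w' u s u''

end RawNet

/-- The balanced (complete) rooted binary phylogenetic tree on `2^k` leaves: root `0` with
root edge `(0,1)`, inner vertices `1, …, 2^k − 1` with children `2i` and `2i+1`, and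
leaves `2^k, …, 2^(k+1) − 1`. -/
def balancedTree (k : ℕ) : RawNet (2 ^ k) :=
  { V := Finset.range (2 ^ (k + 1))
    E := (0, 1) ::ₘ ((Finset.Icc 1 (2 ^ k - 1)).val.bind
          (fun i => {(i, 2 * i), (i, 2 * i + 1)}))
    root := 0
    leaf := fun i => 2 ^ k + (i : ℕ) }

/-- The tree-child network consisting of a chain of `n − 1` triangles: the root is `0`; the
`j`-th triangle (for `j = 0, …, n−2`) has top vertex `3j+1`, middle tree vertex `3j+2` and
reticulation `3j+3`; the second child of the middle vertex is the leaf `3(n−1)+1+j`; the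
child of the reticulation of triangle `j` is the top vertex of triangle `j+1`, except for
the last triangle, whose reticulation has the leaf `3(n−1)+n` as its child. -/
def chainNet (n : ℕ) : RawNet n :=
  { V := Finset.range (3 * (n - 1) + 1 + n)
    E := (0, 1) ::ₘ
      (((Multiset.range (n - 1)).bind (fun j =>
          {(3 * j + 1, 3 * j + 2), (3 * j + 1, 3 * j + 3), (3 * j + 2, 3 * j + 3),
           (3 * j + 2, 3 * (n - 1) + 1 + j)}))
        + ((Multiset.range (n - 2)).map (fun j => (3 * j + 3, 3 * (j + 1) + 1)))
        + {(3 * (n - 2) + 3, 3 * (n - 1) + 1 + (n - 1))})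
    root := 0
    leaf := fun i => 3 * (n - 1) + 1 + (i : ℕ) }

/-!
Induct along the child relation, which is well-founded because the network is a finite DAG.
A non-leaf vertex `v` has a tree child `w`, which `φ` fixes by induction; so `φ v` is also a
parent of `w`, and since a tree vertex has at most one parent, `φ v = v`.
-/

namespace RawNet

variable {n : ℕ} {N : RawNet n}

def descendants (N : RawNet n) (v : ℕ) : Finset ℕ :=
  N.V.filter (Relation.TransGen N.Adj v)

theorem IsPhylo.card_descendants_lt (hN : N.IsPhylo) {v w : ℕ} (hvw : N.Adj v w) :
    (N.descendants w).card < (N.descendants v).card := by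
  refine Finset.card_lt_card ⟨fun u hu => ?_, fun hsub => ?_⟩
  · simp only [descendants, Finset.mem_filter] at hu ⊢
    exact ⟨hu.1, .head hvw hu.2⟩
  · have hw : w ∈ N.descendants v :=
      Finset.mem_filter.2 ⟨(hN.edge_mem _ hvw).2, .single hvw⟩
    exact hN.acyclic w (Finset.mem_filter.1 (hsub hw)).2

theorem IsPhylo.wellFounded_flip_adj (hN : N.IsPhylo) : WellFounded (flip N.Adj) :=
  Subrelation.wf (hN.card_descendants_lt ·) (measure fun v => (N.descendants v).card).wf

theorem eq_of_adj_of_inDeg_le_one {u v w : ℕ} (hw : N.inDeg w ≤ 1) (hu : N.Adj u w)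
    (hv : N.Adj v w) : u = v := by
  have hcard : (N.E.filter (·.2 = w)).toFinset.card ≤ 1 :=
    (Multiset.toFinset_card_le _).trans hw
  have mem {x : ℕ} (hx : N.Adj x w) : (x, w) ∈ (N.E.filter (·.2 = w)).toFinset :=
    Multiset.mem_toFinset.2 (Multiset.mem_filter.2 ⟨hx, rfl⟩)
  exact congrArg Prod.fst (Finset.card_le_one.1 hcard _ (mem hu) _ (mem hv))

theorem IsPhylo.inDeg_le_one (hN : N.IsPhylo) {v : ℕ} (hv : v ∈ N.V) (hret : ¬ N.IsRet v) :
    N.inDeg v ≤ 1 := by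
  rcases hN.classify v hv with rfl | ⟨i, rfl⟩ | h | h
  · simp [hN.root_in]
  · simp [hN.leaf_in]
  · omega
  · exact absurd h.1 hret

theorem IsPhylo.one_le_outDeg (hN : N.IsPhylo) {v : ℕ} (hv : v ∈ N.V)
    (hleaf : ∀ i, v ≠ N.leaf i) : 1 ≤ N.outDeg v := by
  rcases hN.classify v hv with rfl | ⟨i, rfl⟩ | h | h
  · simp [hN.root_out]
  · exact absurd rfl (hleaf i)
  · omega
  · omega

theorem adj_map_of_map_edges_eq {φ : ℕ → ℕ} (hE : N.E.map (fun p => (φ p.1, φ p.2)) = N.E)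
    {u v : ℕ} (huv : N.Adj u v) : N.Adj (φ u) (φ v) := by
  rw [Adj, ← hE]
  exact Multiset.mem_map_of_mem _ huv

end RawNet

theorem treeChild_unique_automorphism_general (n : ℕ) (N : RawNet n)
    (hN : N.IsPhylo) (htc : N.TreeChild)
    (φ : ℕ → ℕ)
    (hE : N.E.map (fun p => (φ p.1, φ p.2)) = N.E)
    (hleaf : ∀ i, φ (N.leaf i) = N.leaf i) :
    ∀ v ∈ N.V, φ v = v := by
  intro v
  induction v using hN.wellFounded_flip_adj.induction with
  | _ v ih =>
    intro hv
    by_cases hv_leaf : ∃ i, v = N.leaf i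
    · obtain ⟨i, rfl⟩ := hv_leaf
      exact hleaf i
    obtain ⟨w, hvw, hw_tree⟩ := htc v hv (hN.one_le_outDeg hv (by simpa using hv_leaf))
    have hwV : w ∈ N.V := (hN.edge_mem _ hvw).2
    have hφw : φ w = w := ih w hvw hwV
    have hφvw : N.Adj (φ v) w := hφw ▸ RawNet.adj_map_of_map_edges_eq hE hvw
    exact RawNet.eq_of_adj_of_inDeg_le_one (hN.inDeg_le_one hwV hw_tree) hφvw hvw

/-- Every tree-child network has exactly one automorphism
(directed-graph isomorphism fixing every labelled leaf), namely the identity: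
any such automorphism fixes every vertex (hence does not exchange any two distinct
vertices or edges). -/
theorem treeChild_unique_automorphism (n : ℕ) (hn : 2 ≤ n) (N : RawNet n)
    (hN : N.IsPhylo) (htc : N.TreeChild)
    (φ : ℕ → ℕ) (hbij : Set.BijOn φ ↑N.V ↑N.V)
    (hE : N.E.map (fun p => (φ p.1, φ p.2)) = N.E)
    (hleaf : ∀ i, φ (N.leaf i) = N.leaf i) :
    ∀ v ∈ N.V, φ v = v :=
  treeChild_unique_automorphism_general n N hN htc φ hE hleaf
end
end

section
/- Let N be a tree-child network on n ≥ 2 leaves and let (e,f) be an SNPR operation on N with e = (u,v) and f = (x,y) not a descendant of e. Then the network (e,f)(N) is tree-child if and only if one of the following holds: (i) e is a reticulation edge and f is not a reticulation edge; (ii) e is a pure tree edge that is not critical; (iii) e is a critical edge and f is incident to u; (iv) e is the critical edge of an r₃ structure with underlying path w, u, x, y such that u and y are the children of x, and f = (x,y); (v) e is the critical edge of a triangle and f is the long side of that triangle. -/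
/-!
Formalization of rooted binary phylogenetic networks (directed multigraphs with
labelled leaves), tree-child networks, and the SNPR / SNPR+ / SNPR− rearrangement
operations, following Klawitter, "The SNPR neighbourhood of tree-child networks".
-/

noncomputable section

attribute [local instance] Classical.propDecidable

/-!
Pruning `e = (u, v)` suppresses `u`, and regrafting subdivides `f = (x, y)` by a fresh vertex
`u''` that becomes the new parent of `v`; all degrees are preserved, `u''` taking over those of
`u`. If `f` is incident to `u`, the result is `N` with `u` renamed to `u''`. Otherwise only two
vertices can lose their last tree child: `u''`, whose children are `y` and `v`, and the parent
`a` of `u`, whose child `u` is replaced by the sibling `w` of `v` (and which gains the child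
`u''` when `x = a`). Unfolding the definition of a critical edge and distinguishing whether `a`
is the root, a reticulation or a tree vertex turns this into conditions (i)–(v). When `a` is the
root and `w` a reticulation, every vertex other than `a` and `u` lies below `v`, so `f` is
incident to `u` or a descendant of `e`.
-/

namespace RawNet

variable {n : ℕ} {N M : RawNet n} {s t u v w a c x y u'' : ℕ}

lemma inDeg_eq_count (N : RawNet n) (t : ℕ) : N.inDeg t = (N.E.map Prod.snd).count t := by
  rw [Multiset.count_map, inDeg]
  simp only [eq_comm]

lemma outDeg_eq_count (N : RawNet n) (t : ℕ) : N.outDeg t = (N.E.map Prod.fst).count t := by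
  rw [Multiset.count_map, outDeg]
  simp only [eq_comm]

lemma outDeg_pos_of_mem (h : (s, t) ∈ N.E) : 0 < N.outDeg s :=
  Multiset.card_pos_iff_exists_mem.2 ⟨_, Multiset.mem_filter.2 ⟨h, rfl⟩⟩

lemma outDeg_eq_card_filter_erase_add_one (h : (s, t) ∈ N.E) :
    N.outDeg s = ((N.E.erase (s, t)).filter (·.1 = s)).card + 1 := by
  conv_lhs => rw [outDeg, ← Multiset.cons_erase h,
    Multiset.filter_cons_of_pos (p := fun e : ℕ × ℕ => e.1 = s) _ rfl]
  exact Multiset.card_cons _ _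

lemma notMem_erase_of_outDeg_eq_one (h : (s, t) ∈ N.E) (h1 : N.outDeg s = 1) :
    (s, c) ∉ N.E.erase (s, t) := fun hc => by
  have : 0 < ((N.E.erase (s, t)).filter (·.1 = s)).card :=
    Multiset.card_pos_iff_exists_mem.2 ⟨(s, c), Multiset.mem_filter.2 ⟨hc, rfl⟩⟩
  rw [outDeg_eq_card_filter_erase_add_one h] at h1
  omega

lemma exists_mem_erase_iff_of_outDeg_eq_two (h : (s, t) ∈ N.E) (h2 : N.outDeg s = 2) :
    ∃ b, ∀ c, (s, c) ∈ N.E.erase (s, t) ↔ c = b := by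
  rw [outDeg_eq_card_filter_erase_add_one h] at h2
  obtain ⟨⟨s', b⟩, hg⟩ :=
    Multiset.card_eq_one.1 (by omega : ((N.E.erase (s, t)).filter (·.1 = s)).card = 1)
  have hmem : (s', b) ∈ (N.E.erase (s, t)).filter (·.1 = s) :=
    hg ▸ Multiset.mem_singleton_self _
  obtain rfl : s' = s := (Multiset.mem_filter.1 hmem).2
  refine ⟨b, fun c => ?_⟩
  have := congrArg ((s', c) ∈ ·) hg
  simpa using this

lemma edgeDesc_iff {e g : ℕ × ℕ} : N.EdgeDesc e g ↔ Relation.ReflTransGen N.Adj e.2 g.1 :=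
  Relation.reflTransGen_iff_eq_or_transGen.symm

lemma inDeg_apply_of_map_snd_eq {φ : ℕ → ℕ} (hφ : φ.Injective)
    (h : M.E.map Prod.snd = (N.E.map Prod.snd).map φ) (t : ℕ) :
    M.inDeg (φ t) = N.inDeg t := by
  rw [inDeg_eq_count, inDeg_eq_count, h, Multiset.count_map_eq_count' _ _ hφ]

lemma outDeg_apply_of_map_fst_eq {φ : ℕ → ℕ} (hφ : φ.Injective)
    (h : M.E.map Prod.fst = (N.E.map Prod.fst).map φ) (t : ℕ) :
    M.outDeg (φ t) = N.outDeg t := by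
  rw [outDeg_eq_count, outDeg_eq_count, h, Multiset.count_map_eq_count' _ _ hφ]

lemma TreeChild.of_map {φ : ℕ → ℕ} (hφ : φ.Injective) (hV : M.V = N.V.image φ)
    (hE : M.E = N.E.map (Prod.map φ φ)) (h : N.TreeChild) : M.TreeChild := by
  have hsnd : M.E.map Prod.snd = (N.E.map Prod.snd).map φ := by
    simp only [hE, Multiset.map_map]
    rfl
  have hfst : M.E.map Prod.fst = (N.E.map Prod.fst).map φ := by
    simp only [hE, Multiset.map_map]
    rfl
  intro t' ht' hout
  obtain ⟨t, ht, rfl⟩ := Finset.mem_image.1 (hV ▸ ht')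
  rw [outDeg_apply_of_map_fst_eq hφ hfst] at hout
  obtain ⟨c, hc, hcr⟩ := h t ht hout
  refine ⟨φ c, hE ▸ Multiset.mem_map_of_mem (Prod.map φ φ) hc, ?_⟩
  rwa [IsRet, inDeg_apply_of_map_snd_eq hφ hsnd]

namespace IsPhylo

lemma ne_of_mem (hN : N.IsPhylo) (h : (s, t) ∈ N.E) : s ≠ t := by
  rintro rfl
  exact hN.acyclic s (.single h)

lemma inDeg_eq_zero_of_notMem (hN : N.IsPhylo) (ht : t ∉ N.V) : N.inDeg t = 0 :=
  Multiset.card_eq_zero.2 <| Multiset.filter_eq_nil.2 fun g hg hgt =>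
    ht (hgt ▸ (hN.edge_mem g hg).2)

lemma outDeg_eq_two (hN : N.IsPhylo) (ht : t ∈ N.V) (hin : N.inDeg t = 1)
    (hout : 0 < N.outDeg t) : N.outDeg t = 2 := by
  rcases hN.classify t ht with rfl | ⟨i, rfl⟩ | h | h
  · simp [hN.root_in] at hin
  · simp [hN.leaf_out] at hout
  · exact h.2
  · omega

lemma exists_parent (hN : N.IsPhylo) (ht : t ∈ N.V) (hroot : t ≠ N.root) :
    ∃ s, (s, t) ∈ N.E := by
  have hpos : 0 < N.inDeg t := by
    rcases hN.classify t ht with h | ⟨i, rfl⟩ | h | h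
    · exact absurd h hroot
    · simp [hN.leaf_in]
    · omega
    · omega
  obtain ⟨g, hg⟩ := Multiset.card_pos_iff_exists_mem.1 hpos
  obtain ⟨hgE, rfl⟩ := Multiset.mem_filter.1 hg
  exact ⟨g.1, hgE⟩

lemma card_ancestors_lt (hN : N.IsPhylo) (h : Relation.TransGen N.Adj s t) :
    (N.V.filter (Relation.TransGen N.Adj · s)).card <
      (N.V.filter (Relation.TransGen N.Adj · t)).card := by
  refine Finset.card_lt_card ⟨fun r hr => ?_, fun hsub => ?_⟩
  · rw [Finset.mem_filter] at hr ⊢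
    exact ⟨hr.1, hr.2.trans h⟩
  · obtain ⟨s', hs', -⟩ := Relation.TransGen.head'_iff.1 h
    have hs : s ∈ N.V.filter (Relation.TransGen N.Adj · t) :=
      Finset.mem_filter.2 ⟨(hN.edge_mem _ hs').1, h⟩
    exact hN.acyclic s (Finset.mem_filter.1 (hsub hs)).2

lemma reflTransGen_root (hN : N.IsPhylo) (ht : t ∈ N.V) :
    Relation.ReflTransGen N.Adj N.root t := by
  induction hk : (N.V.filter (Relation.TransGen N.Adj · t)).card
    using Nat.strong_induction_on generalizing t with
  | _ k ih =>
    by_cases hroot : t = N.root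
    · exact hroot ▸ .refl
    obtain ⟨s, hs⟩ := hN.exists_parent ht hroot
    exact (ih _ (hk ▸ hN.card_ancestors_lt (.single hs)) (hN.edge_mem _ hs).1 rfl).tail hs

end IsPhylo

lemma snprResult_V (N : RawNet n) (hu : u ∈ N.V) (hu'' : u'' ∉ N.V) :
    (N.snprResult u v a w x y u'').V = N.V.image (Equiv.swap u u'') := by
  ext t
  simp only [snprResult, Finset.mem_insert, Finset.mem_erase, Finset.mem_image]
  constructor
  · rintro (rfl | ⟨htu, ht⟩)
    · exact ⟨u, hu, Equiv.swap_apply_left u t⟩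
    · exact ⟨t, ht, Equiv.swap_apply_of_ne_of_ne htu (ht.ne_of_notMem hu'')⟩
  · rintro ⟨s, hs, rfl⟩
    by_cases hsu : s = u
    · exact .inl (hsu ▸ Equiv.swap_apply_left u u'')
    · rw [Equiv.swap_apply_of_ne_of_ne hsu (hs.ne_of_notMem hu'')]
      exact .inr ⟨hsu, hs⟩

section Regraft

variable {Z : Multiset (ℕ × ℕ)}

lemma isRet_iff_of_E_eq (hE : N.E = (u, v) ::ₘ (a, u) ::ₘ (u, w) ::ₘ (x, y) ::ₘ Z)
    (hM : M.E = (a, w) ::ₘ (x, u'') ::ₘ (u'', y) ::ₘ (u'', v) ::ₘ Z)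
    (ht : t ≠ u) (ht'' : t ≠ u'') :
    M.IsRet t ↔ N.IsRet t := by
  simp only [IsRet, inDeg, ← Multiset.countP_eq_card_filter, hE, hM, Multiset.countP_cons]
  split_ifs <;> omega

lemma outDeg_eq_of_E_eq (hE : N.E = (u, v) ::ₘ (a, u) ::ₘ (u, w) ::ₘ (x, y) ::ₘ Z)
    (hM : M.E = (a, w) ::ₘ (x, u'') ::ₘ (u'', y) ::ₘ (u'', v) ::ₘ Z)
    (ht : t ≠ u) (ht'' : t ≠ u'') :
    M.outDeg t = N.outDeg t := by
  simp only [outDeg, ← Multiset.countP_eq_card_filter, hE, hM, Multiset.countP_cons]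
  split_ifs <;> omega

lemma not_isRet_of_E_eq (hE : N.E = (u, v) ::ₘ (a, u) ::ₘ (u, w) ::ₘ (x, y) ::ₘ Z)
    (hM : M.E = (a, w) ::ₘ (x, u'') ::ₘ (u'', y) ::ₘ (u'', v) ::ₘ Z)
    (hu'' : N.inDeg u'' = 0) : ¬ M.IsRet u'' := by
  simp only [IsRet, inDeg, ← Multiset.countP_eq_card_filter, hE, hM,
    Multiset.countP_cons] at hu'' ⊢
  split_ifs at hu'' ⊢
  omega

end Regraft

def HasTreeChild (N : RawNet n) (t : ℕ) : Prop := ∃ c, (t, c) ∈ N.E ∧ ¬ N.IsRet c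

structure PruneSite (N : RawNet n) (u v a w : ℕ) : Prop where
  edge : (u, v) ∈ N.E
  parent_edge : (a, u) ∈ N.E
  sibling_edge : (u, w) ∈ N.E.erase (u, v)
  inDeg_eq_one : N.inDeg u = 1

namespace PruneSite

lemma mem_V (hN : N.IsPhylo) (hP : N.PruneSite u v a w) : u ∈ N.V :=
  (hN.edge_mem _ hP.edge).1

lemma not_isRet (hP : N.PruneSite u v a w) : ¬ N.IsRet u := by
  simp [IsRet, hP.inDeg_eq_one]

lemma exists_eq_cons (hN : N.IsPhylo) (hP : N.PruneSite u v a w) :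
    ∃ X, N.E = (u, v) ::ₘ (a, u) ::ₘ (u, w) ::ₘ X ∧
      ∀ g ∈ X, g.1 ≠ u ∧ g.2 ≠ u := by
  have hau := hN.ne_of_mem hP.parent_edge
  have huv := hN.ne_of_mem hP.edge
  have huw := hN.ne_of_mem (Multiset.mem_of_mem_erase hP.sibling_edge)
  have hE : N.E = (u, v) ::ₘ (a, u) ::ₘ (u, w) ::ₘ
      ((N.E.erase (u, v)).erase (a, u)).erase (u, w) := by
    rw [Multiset.cons_erase, Multiset.cons_erase, Multiset.cons_erase hP.edge]
    · exact (Multiset.mem_erase_of_ne (by simp [hau])).2 hP.parent_edge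
    · exact (Multiset.mem_erase_of_ne (by simp [huw.symm])).2 hP.sibling_edge
  generalize ((N.E.erase (u, v)).erase (a, u)).erase (u, w) = X at hE
  have hin := hP.inDeg_eq_one
  have hout := hN.outDeg_eq_two (hP.mem_V hN) hin (outDeg_pos_of_mem hP.edge)
  rw [inDeg, ← Multiset.countP_eq_card_filter, hE] at hin
  rw [outDeg, ← Multiset.countP_eq_card_filter, hE] at hout
  simp only [Multiset.countP_cons, huv.symm, huw.symm, hau, if_true, if_false] at hin hout
  refine ⟨X, hE, fun g hg => ⟨?_, ?_⟩⟩
  · exact (Multiset.countP_eq_zero (p := (·.1 = u))).1 (by omega) g hg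
  · exact (Multiset.countP_eq_zero (p := (·.2 = u))).1 (by omega) g hg

lemma eq_parent (hN : N.IsPhylo) (hP : N.PruneSite u v a w) (hc : (c, u) ∈ N.E) : c = a := by
  obtain ⟨X, hE, hX⟩ := hP.exists_eq_cons hN
  rw [hE] at hc
  simp only [Multiset.mem_cons, Prod.mk.injEq] at hc
  rcases hc with ⟨-, h⟩ | ⟨h, -⟩ | ⟨-, h⟩ | h
  · exact absurd h (hN.ne_of_mem hP.edge)
  · exact h
  · exact absurd h (hN.ne_of_mem (Multiset.mem_of_mem_erase hP.sibling_edge))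
  · exact absurd rfl (hX _ h).2

lemma eq_or_eq_of_mem (hN : N.IsPhylo) (hP : N.PruneSite u v a w) (hc : (u, c) ∈ N.E) :
    c = v ∨ c = w := by
  obtain ⟨X, hE, hX⟩ := hP.exists_eq_cons hN
  rw [hE] at hc
  simp only [Multiset.mem_cons, Prod.mk.injEq] at hc
  rcases hc with ⟨-, h⟩ | ⟨h, -⟩ | ⟨-, h⟩ | h
  · exact .inl h
  · exact absurd h.symm (hN.ne_of_mem hP.parent_edge)
  · exact .inr h
  · exact absurd rfl (hX _ h).1

lemma incident_iff (hN : N.IsPhylo) (hP : N.PruneSite u v a w) (hf : (x, y) ∈ N.E.erase (u, v)) :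
    x = u ∨ y = u ↔ (x, y) = (a, u) ∨ (x, y) = (u, w) := by
  obtain ⟨X, hE, hX⟩ := hP.exists_eq_cons hN
  rw [hE, Multiset.erase_cons_head] at hf
  simp only [Multiset.mem_cons, Prod.mk.injEq] at hf ⊢
  rcases hf with ⟨rfl, rfl⟩ | ⟨rfl, rfl⟩ | hf
  · simp
  · simp
  · have := hX _ hf
    simp_all

lemma not_isRet_sibling (hN : N.IsPhylo) (htc : N.TreeChild) (hP : N.PruneSite u v a w)
    (hv : N.IsRet v) : ¬ N.IsRet w := by
  obtain ⟨c, hc, hcr⟩ := htc u (hP.mem_V hN) (outDeg_pos_of_mem hP.edge)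
  rcases hP.eq_or_eq_of_mem hN hc with rfl | rfl
  · exact absurd hv hcr
  · exact hcr

lemma exists_parent_ne_of_isRet (hN : N.IsPhylo) (htc : N.TreeChild) (hP : N.PruneSite u v a w)
    (hw : N.IsRet w) : ∃ p, p ≠ u ∧ (p, w) ∈ N.E := by
  obtain ⟨X, hE, hX⟩ := hP.exists_eq_cons hN
  have hvw : v ≠ w := by
    rintro rfl
    exact hP.not_isRet_sibling hN htc hw hw
  have huw := hN.ne_of_mem (Multiset.mem_of_mem_erase hP.sibling_edge)
  have hin : N.inDeg w = 2 := hw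
  rw [inDeg, ← Multiset.countP_eq_card_filter, hE] at hin
  simp only [Multiset.countP_cons, hvw, huw, if_true, if_false] at hin
  obtain ⟨g, hg, hgw⟩ := Multiset.countP_pos.1 (by omega : 0 < X.countP (·.2 = w))
  refine ⟨g.1, (hX g hg).1, ?_⟩
  rw [hE, ← hgw]
  simp [hg]

lemma critical_iff (hN : N.IsPhylo) (hP : N.PruneSite u v a w) :
    N.Critical (u, v) ↔ ¬ N.IsRet v ∧ N.IsRet w ∧
      (N.IsRet a ∨ ∃ b, (a, b) ∈ N.E.erase (a, u) ∧ N.IsRet b) := by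
  have hparent : ∀ c, (c, u) ∈ N.E ↔ c = a :=
    fun c => ⟨hP.eq_parent hN, by rintro rfl; exact hP.parent_edge⟩
  have hchild : ∀ c, (u, c) ∈ N.E ↔ c = v ∨ c = w := fun c =>
    ⟨hP.eq_or_eq_of_mem hN, by
      rintro (rfl | rfl)
      exacts [hP.edge, Multiset.mem_of_mem_erase hP.sibling_edge]⟩
  simp only [Critical, hparent, hchild, or_and_right, exists_or, exists_and_left, exists_eq_left]
  tauto

lemma parent_cases (hN : N.IsPhylo) (hP : N.PruneSite u v a w) :
    ((a = N.root ∨ N.IsRet a) ∧ ∀ c, (a, c) ∉ N.E.erase (a, u)) ∨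
      (¬ N.IsRet a ∧ ∃ b, ∀ c, (a, c) ∈ N.E.erase (a, u) ↔ c = b) := by
  rcases hN.classify a (hN.edge_mem _ hP.parent_edge).1 with
    rfl | ⟨i, rfl⟩ | ⟨hin, hout⟩ | ⟨hin, hout⟩
  · exact .inl ⟨.inl rfl, fun c => notMem_erase_of_outDeg_eq_one hP.parent_edge hN.root_out⟩
  · simpa [hN.leaf_out] using outDeg_pos_of_mem hP.parent_edge
  · exact .inr ⟨by simp [IsRet, hin],
      exists_mem_erase_iff_of_outDeg_eq_two hP.parent_edge hout⟩
  · exact .inl ⟨.inr hin, fun c => notMem_erase_of_outDeg_eq_one hP.parent_edge hout⟩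

lemma incident_of_parent_eq_root (hN : N.IsPhylo) (htc : N.TreeChild)
    (hP : N.PruneSite u v a w) (hroot : a = N.root) (hw : N.IsRet w) (hf : (x, y) ∈ N.E)
    (hdesc : ¬ N.EdgeDesc (u, v) (x, y)) : x = u ∨ y = u := by
  subst hroot
  have honly : ∀ c, (N.root, c) ∈ N.E → c = u := fun c hc => by
    by_contra hcu
    exact notMem_erase_of_outDeg_eq_one hP.parent_edge hN.root_out
      ((Multiset.mem_erase_of_ne (by simpa using hcu)).2 hc)
  have hbelow : ∀ t ∈ N.V, t = N.root ∨ t = u ∨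
      Relation.ReflTransGen N.Adj v t ∨ Relation.ReflTransGen N.Adj w t := by
    intro t ht
    rcases Relation.ReflTransGen.cases_head_iff.1 (hN.reflTransGen_root ht) with
      h | ⟨c, hc, hct⟩
    · exact .inl h.symm
    obtain rfl := honly c hc
    rcases Relation.ReflTransGen.cases_head_iff.1 hct with h | ⟨c, hc, hct⟩
    · exact .inr (.inl h.symm)
    rcases hP.eq_or_eq_of_mem hN hc with rfl | rfl
    · exact .inr (.inr (.inl hct))
    · exact .inr (.inr (.inr hct))
  -- the second parent of `w` cannot lie below `w`, so it lies below `v`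
  have hvw : Relation.ReflTransGen N.Adj v w := by
    obtain ⟨p, hpu, hp⟩ := hP.exists_parent_ne_of_isRet hN htc hw
    rcases hbelow p (hN.edge_mem _ hp).1 with rfl | rfl | h | h
    · exact absurd (honly w hp) (hN.ne_of_mem (Multiset.mem_of_mem_erase hP.sibling_edge)).symm
    · exact absurd rfl hpu
    · exact h.tail hp
    · exact absurd (.tail' h hp) (hN.acyclic w)
  rw [edgeDesc_iff] at hdesc
  rcases hbelow x (hN.edge_mem _ hf).1 with rfl | rfl | h | h
  · exact .inr (honly y hf)
  · exact .inl rfl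
  · exact absurd h hdesc
  · exact absurd (hvw.trans h) hdesc

lemma treeChild_snprResult_of_incident (hN : N.IsPhylo) (htc : N.TreeChild)
    (hP : N.PruneSite u v a w) (hu'' : u'' ∉ N.V) (hf : (x, y) = (a, u) ∨ (x, y) = (u, w)) :
    (N.snprResult u v a w x y u'').TreeChild := by
  obtain ⟨X, hE, hX⟩ := hP.exists_eq_cons hN
  refine htc.of_map (Equiv.swap u u'').injective (snprResult_V N (hP.mem_V hN) hu'') ?_
  have hfix : ∀ t ∈ N.V, t ≠ u → Equiv.swap u u'' t = t := fun t ht htu =>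
    Equiv.swap_apply_of_ne_of_ne htu (ht.ne_of_notMem hu'')
  have hXfix : X.map (Prod.map (Equiv.swap u u'') (Equiv.swap u u'')) = X := by
    refine (Multiset.map_congr rfl fun g hg => ?_).trans (Multiset.map_id X)
    have hgE := hN.edge_mem g (hE ▸ by simp [hg])
    exact Prod.ext (hfix _ hgE.1 (hX g hg).1) (hfix _ hgE.2 (hX g hg).2)
  simp only [snprResult, if_pos hf, hE, Multiset.erase_cons_head, Multiset.map_cons, hXfix]
  have hv := hN.edge_mem _ hP.edge
  have ha := hN.edge_mem _ hP.parent_edge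
  have hw := hN.edge_mem _ (Multiset.mem_of_mem_erase hP.sibling_edge)
  rw [Prod.map_apply, Prod.map_apply, Prod.map_apply, Equiv.swap_apply_left,
    hfix v hv.2 (hN.ne_of_mem hP.edge).symm, hfix a ha.1 (hN.ne_of_mem hP.parent_edge),
    hfix w hw.2 (hN.ne_of_mem (Multiset.mem_of_mem_erase hP.sibling_edge)).symm,
    Multiset.erase_add_right_pos X (Multiset.mem_singleton_self _), Multiset.erase_singleton,
    add_zero]
  simp only [Multiset.insert_eq_cons, ← Multiset.singleton_add]
  abel

lemma exists_eq_cons_snprResult (hN : N.IsPhylo) (hP : N.PruneSite u v a w)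
    (hf : (x, y) ∈ N.E.erase (u, v)) (hxu : x ≠ u) (hyu : y ≠ u) :
    ∃ Z, N.E = (u, v) ::ₘ (a, u) ::ₘ (u, w) ::ₘ (x, y) ::ₘ Z ∧
      (∀ g ∈ Z, g.1 ≠ u ∧ g.2 ≠ u) ∧
      (N.snprResult u v a w x y u'').E =
        (a, w) ::ₘ (x, u'') ::ₘ (u'', y) ::ₘ (u'', v) ::ₘ Z := by
  obtain ⟨X, hE, hX⟩ := hP.exists_eq_cons hN
  have hxy : (x, y) ∈ X := by
    rw [hE, Multiset.erase_cons_head] at hf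
    simpa [hxu, hyu] using hf
  have hnot : ¬ ((x, y) = (a, u) ∨ (x, y) = (u, w)) := by simp [hxu, hyu]
  refine ⟨X.erase (x, y), by rw [hE, Multiset.cons_erase hxy],
    fun g hg => hX g (Multiset.mem_of_mem_erase hg), ?_⟩
  simp only [snprResult, if_neg hnot, hE, Multiset.erase_cons_head]
  rw [Multiset.erase_add_left_pos _ hxy]
  simp only [Multiset.insert_eq_cons, ← Multiset.singleton_add]
  abel

lemma hasTreeChild_fresh_iff (hN : N.IsPhylo) (hP : N.PruneSite u v a w)
    (hf : (x, y) ∈ N.E.erase (u, v)) (hxu : x ≠ u) (hyu : y ≠ u) (hu'' : u'' ∉ N.V) :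
    (N.snprResult u v a w x y u'').HasTreeChild u'' ↔ ¬ N.IsRet y ∨ ¬ N.IsRet v := by
  obtain ⟨Z, hE, -, hM⟩ := hP.exists_eq_cons_snprResult (u'' := u'') hN hf hxu hyu
  have hyV := (hN.edge_mem _ (Multiset.mem_of_mem_erase hf)).2
  have hvV := (hN.edge_mem _ hP.edge).2
  have hy := isRet_iff_of_E_eq hE hM hyu (hyV.ne_of_notMem hu'')
  have hv := isRet_iff_of_E_eq hE hM (hN.ne_of_mem hP.edge).symm (hvV.ne_of_notMem hu'')
  constructor
  · rintro ⟨c, hc, hcr⟩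
    rw [hM] at hc
    simp only [Multiset.mem_cons, Prod.mk.injEq] at hc
    rcases hc with ⟨h, -⟩ | ⟨h, -⟩ | ⟨-, rfl⟩ | ⟨-, rfl⟩ | hc
    · exact absurd h ((hN.edge_mem _ hP.parent_edge).1.ne_of_notMem hu'').symm
    · exact absurd h ((hN.edge_mem _ (Multiset.mem_of_mem_erase hf)).1.ne_of_notMem hu'').symm
    · exact .inl (mt hy.2 hcr)
    · exact .inr (mt hv.2 hcr)
    · exact absurd (hN.edge_mem (u'', c) (by rw [hE]; simp [hc])).1 hu''
  · rintro (hyr | hvr)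
    · exact ⟨y, hM ▸ by simp, mt hy.1 hyr⟩
    · exact ⟨v, hM ▸ by simp, mt hv.1 hvr⟩

lemma hasTreeChild_parent_iff (hN : N.IsPhylo) (hP : N.PruneSite u v a w)
    (hf : (x, y) ∈ N.E.erase (u, v)) (hxu : x ≠ u) (hyu : y ≠ u) (hu'' : u'' ∉ N.V) :
    (N.snprResult u v a w x y u'').HasTreeChild a ↔
      ¬ N.IsRet w ∨ x = a ∨ ∃ b, (a, b) ∈ N.E.erase (a, u) ∧ ¬ N.IsRet b := by
  obtain ⟨Z, hE, hZ, hM⟩ := hP.exists_eq_cons_snprResult (u'' := u'') hN hf hxu hyu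
  have hau := hN.ne_of_mem hP.parent_edge
  have haV := (hN.edge_mem _ hP.parent_edge).1
  have hwE := Multiset.mem_of_mem_erase hP.sibling_edge
  have hw := isRet_iff_of_E_eq hE hM (hN.ne_of_mem hwE).symm
    ((hN.edge_mem _ hwE).2.ne_of_notMem hu'')
  have hZ_isRet : ∀ b, (a, b) ∈ Z → ((N.snprResult u v a w x y u'').IsRet b ↔ N.IsRet b) :=
    fun b hb => isRet_iff_of_E_eq hE hM (hZ _ hb).2
      ((hN.edge_mem (a, b) (by rw [hE]; simp [hb])).2.ne_of_notMem hu'')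
  have hEa : N.E.erase (a, u) = (u, v) ::ₘ (u, w) ::ₘ (x, y) ::ₘ Z := by
    rw [hE, Multiset.erase_cons_tail _ (show ((u, v) : ℕ × ℕ) ≠ (a, u) by simp [hau.symm]),
      Multiset.erase_cons_head]
  constructor
  · rintro ⟨c, hc, hcr⟩
    rw [hM] at hc
    simp only [Multiset.mem_cons, Prod.mk.injEq] at hc
    rcases hc with ⟨-, rfl⟩ | ⟨h, -⟩ | ⟨h, -⟩ | ⟨h, -⟩ | hc
    · exact .inl (mt hw.2 hcr)
    · exact .inr (.inl h.symm)
    · exact absurd h (haV.ne_of_notMem hu'')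
    · exact absurd h (haV.ne_of_notMem hu'')
    · exact .inr (.inr ⟨c, by rw [hEa]; simp [hc], mt (hZ_isRet c hc).2 hcr⟩)
  · have hfresh := not_isRet_of_E_eq hE hM (hN.inDeg_eq_zero_of_notMem hu'')
    rintro (hwr | rfl | ⟨b, hb, hbr⟩)
    · exact ⟨w, by rw [hM]; simp, mt hw.1 hwr⟩
    · exact ⟨u'', by rw [hM]; simp, hfresh⟩
    rw [hEa] at hb
    simp only [Multiset.mem_cons, Prod.mk.injEq] at hb
    rcases hb with ⟨h, -⟩ | ⟨h, -⟩ | ⟨rfl, -⟩ | hb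
    · exact absurd h hau
    · exact absurd h hau
    · exact ⟨u'', by rw [hM]; simp, hfresh⟩
    · exact ⟨b, by rw [hM]; simp [hb], mt (hZ_isRet b hb).1 hbr⟩

lemma hasTreeChild_snprResult_of_ne (hN : N.IsPhylo) (htc : N.TreeChild)
    (hP : N.PruneSite u v a w)
    (hf : (x, y) ∈ N.E.erase (u, v)) (hxu : x ≠ u) (hyu : y ≠ u) (hu'' : u'' ∉ N.V)
    (ht : t ∈ N.V) (htu : t ≠ u) (hta : t ≠ a)
    (hout : 1 ≤ (N.snprResult u v a w x y u'').outDeg t) :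
    (N.snprResult u v a w x y u'').HasTreeChild t := by
  obtain ⟨Z, hE, hZ, hM⟩ := hP.exists_eq_cons_snprResult (u'' := u'') hN hf hxu hyu
  by_cases htx : t = x
  · exact ⟨u'', by rw [hM, htx]; simp,
      not_isRet_of_E_eq hE hM (hN.inDeg_eq_zero_of_notMem hu'')⟩
  rw [outDeg_eq_of_E_eq hE hM htu (ht.ne_of_notMem hu'')] at hout
  obtain ⟨c, hc, hcr⟩ := htc t ht hout
  rw [hE] at hc
  simp only [Multiset.mem_cons, Prod.mk.injEq] at hc
  rcases hc with ⟨h, -⟩ | ⟨h, -⟩ | ⟨h, -⟩ | ⟨h, -⟩ | hc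
  · exact absurd h htu
  · exact absurd h hta
  · exact absurd h htu
  · exact absurd h htx
  refine ⟨c, by rw [hM]; simp [hc], mt (isRet_iff_of_E_eq hE hM (hZ _ hc).2 ?_).1 hcr⟩
  exact (hN.edge_mem (t, c) (by rw [hE]; simp [hc])).2.ne_of_notMem hu''

lemma treeChild_snprResult_iff_of_not_incident (hN : N.IsPhylo) (htc : N.TreeChild)
    (hP : N.PruneSite u v a w)
    (hf : (x, y) ∈ N.E.erase (u, v)) (hxu : x ≠ u) (hyu : y ≠ u) (hu'' : u'' ∉ N.V) :
    (N.snprResult u v a w x y u'').TreeChild ↔ (¬ N.IsRet y ∨ ¬ N.IsRet v) ∧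
      (¬ N.IsRet w ∨ x = a ∨ ∃ b, (a, b) ∈ N.E.erase (a, u) ∧ ¬ N.IsRet b) := by
  rw [← hP.hasTreeChild_fresh_iff hN hf hxu hyu hu'',
    ← hP.hasTreeChild_parent_iff hN hf hxu hyu hu'']
  obtain ⟨Z, -, -, hM⟩ := hP.exists_eq_cons_snprResult (u'' := u'') hN hf hxu hyu
  have hau := hN.ne_of_mem hP.parent_edge
  have haV := (hN.edge_mem _ hP.parent_edge).1
  constructor
  · intro h
    refine ⟨h u'' (Finset.mem_insert_self _ _) (outDeg_pos_of_mem (t := v) (by rw [hM]; simp)),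
      h a (Finset.mem_insert_of_mem (Finset.mem_erase.2 ⟨hau, haV⟩))
        (outDeg_pos_of_mem (t := w) (by rw [hM]; simp))⟩
  · rintro ⟨hfresh, hparent⟩ t ht hout
    rcases Finset.mem_insert.1 ht with rfl | ht
    · exact hfresh
    obtain ⟨htu, ht⟩ := Finset.mem_erase.1 ht
    by_cases hta : t = a
    · exact hta ▸ hparent
    · exact hP.hasTreeChild_snprResult_of_ne hN htc hf hxu hyu hu'' ht htu hta hout

lemma conditions_iff_of_not_incident (hN : N.IsPhylo) (htc : N.TreeChild)
    (hP : N.PruneSite u v a w) (hf : (x, y) ∈ N.E) (hxu : x ≠ u) (hyu : y ≠ u)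
    (hdesc : ¬ N.EdgeDesc (u, v) (x, y)) :
    ((N.IsRet v ∧ ¬ N.IsRet y) ∨
      (N.PureTree (u, v) ∧ ¬ N.Critical (u, v)) ∨
      (N.Critical (u, v) ∧ (x = u ∨ y = u)) ∨
      (¬ N.IsRet v ∧ (x, u) ∈ N.E ∧ N.IsRet y ∧
        ∃ w₂, (u, w₂) ∈ N.E.erase (u, v) ∧ N.IsRet w₂) ∨
      (¬ N.IsRet v ∧ (x, u) ∈ N.E ∧ (u, y) ∈ N.E ∧ N.IsRet y)) ↔
    (¬ N.IsRet y ∨ ¬ N.IsRet v) ∧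
      (¬ N.IsRet w ∨ x = a ∨ ∃ b, (a, b) ∈ N.E.erase (a, u) ∧ ¬ N.IsRet b) := by
  have hxa : (x, u) ∈ N.E ↔ x = a := ⟨hP.eq_parent hN, by rintro rfl; exact hP.parent_edge⟩
  simp only [PureTree, hP.critical_iff hN, hxa, hxu, hyu, or_self, and_false, false_or,
    hP.not_isRet, not_false_eq_true, true_and]
  by_cases hv : N.IsRet v
  · have hw := hP.not_isRet_sibling hN htc hv
    simp [hv, hw]
  have hchild : ∀ c, (u, c) ∈ N.E → N.IsRet c → c = w := fun c hc hcr =>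
    (hP.eq_or_eq_of_mem hN hc).resolve_left (by rintro rfl; exact hv hcr)
  have hw₂ : (∃ w₂, (u, w₂) ∈ N.E.erase (u, v) ∧ N.IsRet w₂) ↔ N.IsRet w :=
    ⟨fun ⟨c, hc, hcr⟩ => hchild c (Multiset.mem_of_mem_erase hc) hcr ▸ hcr,
      fun h => ⟨w, hP.sibling_edge, h⟩⟩
  have hsibling : x = a → (a, y) ∈ N.E.erase (a, u) := by
    rintro rfl
    exact (Multiset.mem_erase_of_ne (by simp [hyu])).2 hf
  simp only [hv, hw₂, not_false_eq_true, true_and, false_and, false_or, or_true]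
  by_cases hw : N.IsRet w
  swap
  · simp [hw]
  rcases hP.parent_cases hN with ⟨hroot | hret, hnone⟩ | ⟨hnret, b, hb⟩
  · exact absurd (hP.incident_of_parent_eq_root hN htc hroot hw hf hdesc) (by simp [hxu, hyu])
  · have hxa' : x ≠ a := fun h => hnone y (hsibling h)
    simp [hw, hret, hnone, hxa']
  · by_cases hx : x = a
    · obtain rfl := (hb y).1 (hsibling hx)
      simp only [hb, hw, hnret, hx, exists_eq_left, true_and, false_or, not_true_eq_false]
      tauto
    · simp [hb, hw, hnret, hx]

end PruneSite

end RawNet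

theorem snpr_treeChild_respecting_iff_general (n : ℕ) (N : RawNet n)
    (hN : N.IsPhylo) (htc : N.TreeChild) (u v x y a w u'' : ℕ)
    (he : (u, v) ∈ N.E) (hu : N.inDeg u = 1)
    (hf : (x, y) ∈ N.E.erase (u, v)) (hdesc : ¬ N.EdgeDesc (u, v) (x, y))
    (ha : (a, u) ∈ N.E) (hw : (u, w) ∈ N.E.erase (u, v)) (hu'' : u'' ∉ N.V) :
    (N.snprResult u v a w x y u'').TreeChild ↔
      (N.IsRet v ∧ ¬ N.IsRet y) ∨
      (N.PureTree (u, v) ∧ ¬ N.Critical (u, v)) ∨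
      (N.Critical (u, v) ∧ (x = u ∨ y = u)) ∨
      (¬ N.IsRet v ∧ (x, u) ∈ N.E ∧ N.IsRet y ∧
        ∃ w₂, (u, w₂) ∈ N.E.erase (u, v) ∧ N.IsRet w₂) ∨
      (¬ N.IsRet v ∧ (x, u) ∈ N.E ∧ (u, y) ∈ N.E ∧ N.IsRet y) := by
  have hP : N.PruneSite u v a w := ⟨he, ha, hw, hu⟩
  by_cases hinc : x = u ∨ y = u
  · have hf' := (hP.incident_iff hN hf).1 hinc
    refine iff_of_true (hP.treeChild_snprResult_of_incident hN htc hu'' hf') ?_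
    by_cases hv : N.IsRet v
    · refine .inl ⟨hv, ?_⟩
      rcases hf' with h | h <;> obtain ⟨-, rfl⟩ := Prod.ext_iff.1 h
      exacts [hP.not_isRet, hP.not_isRet_sibling hN htc hv]
    · by_cases hc : N.Critical (u, v)
      · exact .inr (.inr (.inl ⟨hc, hinc⟩))
      · exact .inr (.inl ⟨⟨hP.not_isRet, hv⟩, hc⟩)
  · obtain ⟨hxu, hyu⟩ := not_or.1 hinc
    rw [hP.treeChild_snprResult_iff_of_not_incident hN htc hf hxu hyu hu'',
      hP.conditions_iff_of_not_incident hN htc (Multiset.mem_of_mem_erase hf) hxu hyu hdesc]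

/-- Characterisation of the tree-child respecting SNPR operations `(e,f)`
on a tree-child network `N`, with `e = (u,v)` (parent edge `(a,u)`, sibling edge `(u,w)`)
and `f = (x,y)` an edge other than `e` that is not a descendant of `e`:
the resulting network is tree-child iff
(i) `e` is a reticulation edge and `f` is not a reticulation edge; or
(ii) `e` is a pure tree edge that is not critical; or
(iii) `e` is critical and `f` is incident to `u`; or
(iv) `e` is the critical edge of an `r₃` structure with underlying path `w₂, u, x, y`
     such that `u` and `y` are the children of `x` and `f = (x,y)`; or
(v) `e` is the critical edge of a triangle and `f` is its long side. -/
theorem snpr_treeChild_respecting_iff (n : ℕ) (hn : 2 ≤ n) (N : RawNet n)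
    (hN : N.IsPhylo) (htc : N.TreeChild) (u v x y a w u'' : ℕ)
    (he : (u, v) ∈ N.E) (hu : N.inDeg u = 1)
    (hf : (x, y) ∈ N.E.erase (u, v)) (hdesc : ¬ N.EdgeDesc (u, v) (x, y))
    (ha : (a, u) ∈ N.E) (hw : (u, w) ∈ N.E.erase (u, v)) (hu'' : u'' ∉ N.V) :
    (N.snprResult u v a w x y u'').TreeChild ↔
      (N.IsRet v ∧ ¬ N.IsRet y) ∨
      (N.PureTree (u, v) ∧ ¬ N.Critical (u, v)) ∨
      (N.Critical (u, v) ∧ (x = u ∨ y = u)) ∨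
      (¬ N.IsRet v ∧ (x, u) ∈ N.E ∧ N.IsRet y ∧
        ∃ w₂, (u, w₂) ∈ N.E.erase (u, v) ∧ N.IsRet w₂) ∨
      (¬ N.IsRet v ∧ (x, u) ∈ N.E ∧ (u, y) ∈ N.E ∧ N.IsRet y) :=
  snpr_treeChild_respecting_iff_general n N hN htc u v x y a w u'' he hu hf hdesc ha hw hu''
end
end

section
/- Let N be a tree-child network on n ≥ 2 leaves with r reticulations. Then the number of tree-child respecting SNPR− operations on N equals 2r; that is, every SNPR− operation on N (deleting one of the 2r reticulation edges and suppressing the two resulting degree-two vertices) yields a tree-child network. -/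
/-!
Formalization of rooted binary phylogenetic networks (directed multigraphs with
labelled leaves), tree-child networks, and the SNPR / SNPR+ / SNPR− rearrangement
operations, following Klawitter, "The SNPR neighbourhood of tree-child networks".
-/

noncomputable section

attribute [local instance] Classical.propDecidable

/-! Deleting a reticulation edge `(u,v)` removes only the vertices `u` and `v`, and leaves the
in-degree of every other vertex unchanged. In a tree-child network the sibling `w` of `v` and the
child `z` of `v` are tree vertices, so the new edges `(a,w)` and `(c,z)` provide tree children
for the former parents `a` of `u` and `c` of `v`; any other vertex keeps its old tree child,
which cannot have been `u` or `v`. -/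

namespace Multiset

variable {α : Type*} {p : α → Prop} [DecidablePred p] {s : Multiset α} {a b x : α}

lemma eq_of_card_filter_eq_one (hs : (s.filter p).card = 1) (ha : a ∈ s) (hpa : p a)
    (hx : x ∈ s) (hpx : p x) : x = a := by
  obtain ⟨y, hy⟩ := card_eq_one.1 hs
  have hay : a = y := mem_singleton.1 (hy ▸ mem_filter.2 ⟨ha, hpa⟩)
  have hxy : x = y := mem_singleton.1 (hy ▸ mem_filter.2 ⟨hx, hpx⟩)
  rw [hay, hxy]

variable [DecidableEq α]

lemma exists_mem_erase_of_card_filter_eq_two (hs : (s.filter p).card = 2) (ha : a ∈ s)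
    (hpa : p a) : ∃ b ∈ s.erase a, p b := by
  rw [← cons_erase ha, filter_cons_of_pos _ hpa, card_cons] at hs
  obtain ⟨b, hb⟩ := card_pos_iff_exists_mem.1 (show 0 < ((s.erase a).filter p).card by omega)
  exact ⟨b, mem_filter.1 hb⟩

lemma eq_or_eq_of_card_filter_eq_two (hs : (s.filter p).card = 2) (ha : a ∈ s) (hpa : p a)
    (hb : b ∈ s.erase a) (hpb : p b) (hx : x ∈ s) (hpx : p x) : x = a ∨ x = b := by
  rw [← cons_erase ha, ← cons_erase hb] at hs hx
  rw [filter_cons_of_pos _ hpa, filter_cons_of_pos _ hpb, card_cons, card_cons] at hs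
  have hrest : ((s.erase a).erase b).filter p = 0 := card_eq_zero.1 (by omega)
  rcases mem_cons.1 hx with hxa | hx
  · exact Or.inl hxa
  rcases mem_cons.1 hx with hxb | hx
  · exact Or.inr hxb
  · exact absurd (hrest ▸ mem_filter.2 ⟨hx, hpx⟩) (notMem_zero x)

end Multiset

namespace RawNet

variable {n : ℕ} {N : RawNet n}

lemma outDeg_pos {x y : ℕ} (h : (x, y) ∈ N.E) : 0 < N.outDeg x :=
  Multiset.card_pos_iff_exists_mem.2 ⟨(x, y), Multiset.mem_filter.2 ⟨h, rfl⟩⟩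

lemma exists_child {x : ℕ} (h : 0 < N.outDeg x) : ∃ y, (x, y) ∈ N.E := by
  obtain ⟨⟨x', y⟩, hg⟩ := Multiset.card_pos_iff_exists_mem.1 h
  obtain ⟨hE, rfl : x' = x⟩ := Multiset.mem_filter.1 hg
  exact ⟨y, hE⟩

lemma exists_parent {y : ℕ} (h : 0 < N.inDeg y) : ∃ x, (x, y) ∈ N.E := by
  obtain ⟨⟨x, y'⟩, hg⟩ := Multiset.card_pos_iff_exists_mem.1 h
  obtain ⟨hE, rfl : y' = y⟩ := Multiset.mem_filter.1 hg
  exact ⟨x, hE⟩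

lemma exists_other_child {u v : ℕ} (h : N.outDeg u = 2) (he : (u, v) ∈ N.E) :
    ∃ w, (u, w) ∈ N.E.erase (u, v) := by
  obtain ⟨⟨u', w⟩, hw, rfl : u' = u⟩ :=
    Multiset.exists_mem_erase_of_card_filter_eq_two h he rfl
  exact ⟨w, hw⟩

lemma exists_other_parent {u v : ℕ} (h : N.inDeg v = 2) (he : (u, v) ∈ N.E) :
    ∃ c, (c, v) ∈ N.E.erase (u, v) := by
  obtain ⟨⟨c, v'⟩, hc, rfl : v' = v⟩ :=
    Multiset.exists_mem_erase_of_card_filter_eq_two h he rfl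
  exact ⟨c, hc⟩

lemma eq_of_outDeg_eq_one {x y z : ℕ} (h : N.outDeg x = 1) (hz : (x, z) ∈ N.E)
    (hy : (x, y) ∈ N.E) : y = z :=
  congrArg Prod.snd (Multiset.eq_of_card_filter_eq_one h hz rfl hy rfl)

lemma eq_of_inDeg_eq_one {x y a : ℕ} (h : N.inDeg y = 1) (ha : (a, y) ∈ N.E)
    (hx : (x, y) ∈ N.E) : x = a :=
  congrArg Prod.fst (Multiset.eq_of_card_filter_eq_one h ha rfl hx rfl)

lemma eq_or_eq_of_outDeg_eq_two {u v w y : ℕ} (h : N.outDeg u = 2) (hv : (u, v) ∈ N.E)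
    (hw : (u, w) ∈ N.E.erase (u, v)) (hy : (u, y) ∈ N.E) : y = v ∨ y = w := by
  simpa using Multiset.eq_or_eq_of_card_filter_eq_two h hv rfl hw rfl hy rfl

lemma eq_or_eq_of_inDeg_eq_two {u v c x : ℕ} (h : N.inDeg v = 2) (hu : (u, v) ∈ N.E)
    (hc : (c, v) ∈ N.E.erase (u, v)) (hx : (x, v) ∈ N.E) : x = u ∨ x = c := by
  simpa using Multiset.eq_or_eq_of_card_filter_eq_two h hu rfl hc rfl hx rfl

lemma IsPhylo.ne_of_mem_E (hN : N.IsPhylo) {x y : ℕ} (h : (x, y) ∈ N.E) : x ≠ y := by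
  rintro rfl
  exact hN.acyclic x (.single h)

lemma IsPhylo.swap_notMem_E (hN : N.IsPhylo) {x y : ℕ} (h : (x, y) ∈ N.E) : (y, x) ∉ N.E :=
  fun h' => hN.acyclic x (.head (show N.Adj x y from h) (.single h'))

lemma IsPhylo.outDeg_eq_one_of_isRet (hN : N.IsPhylo) {v : ℕ} (hvV : v ∈ N.V)
    (hv : N.IsRet v) : N.outDeg v = 1 := by
  have hv : N.inDeg v = 2 := hv
  rcases hN.classify v hvV with rfl | ⟨i, rfl⟩ | ⟨h1, -⟩ | ⟨-, h1⟩
  · rw [hN.root_in] at hv; omega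
  · rw [hN.leaf_in i] at hv; omega
  · omega
  · exact h1

lemma TreeChild.not_isRet_of_forall_child (htc : N.TreeChild) {x y : ℕ} (hxV : x ∈ N.V)
    (hy : (x, y) ∈ N.E) (hchild : ∀ y', (x, y') ∈ N.E → y' = y ∨ N.IsRet y') :
    ¬ N.IsRet y := by
  obtain ⟨y', hy', hy'R⟩ := htc x hxV (outDeg_pos hy)
  rcases hchild y' hy' with rfl | hR
  exacts [hy'R, absurd hR hy'R]

lemma TreeChild.inDeg_eq_one_and_outDeg_eq_two_of_isRet (hN : N.IsPhylo) (htc : N.TreeChild)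
    {u v : ℕ} (he : (u, v) ∈ N.E) (hv : N.IsRet v) : N.inDeg u = 1 ∧ N.outDeg u = 2 := by
  have huV := (hN.edge_mem _ he).1
  have hout : N.outDeg u ≠ 1 := fun h1 =>
    htc.not_isRet_of_forall_child huV he (fun _ hy => .inl (eq_of_outDeg_eq_one h1 he hy)) hv
  rcases hN.classify u huV with rfl | ⟨i, rfl⟩ | h | ⟨-, h1⟩
  · exact absurd hN.root_out hout
  · exact absurd (hN.leaf_out i) (outDeg_pos he).ne'
  · exact h
  · exact absurd h1 hout

lemma snprMinusResult_V (u v a w c z : ℕ) :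
    (N.snprMinusResult u v a w c z).V = (N.V.erase u).erase v := by
  unfold snprMinusResult
  split_ifs <;> rfl

lemma snprMinusResult_E_add_of_ne {u v a w c z : ℕ} (huc : u ≠ c) (huv : u ≠ v)
    (hau : a ≠ u) (hav : a ≠ v) (hwv : w ≠ v) (hcv : c ≠ v) (he : (u, v) ∈ N.E)
    (ha : (a, u) ∈ N.E) (hw : (u, w) ∈ N.E.erase (u, v)) (hc : (c, v) ∈ N.E.erase (u, v))
    (hz : (v, z) ∈ N.E) :
    (N.snprMinusResult u v a w c z).E + {(u, v), (a, u), (u, w), (c, v), (v, z)} =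
      N.E + {(a, w), (c, z)} := by
  have h₂ : (a, u) ∈ N.E.erase (u, v) := (Multiset.mem_erase_of_ne (by simp [hau])).2 ha
  have h₃ : (u, w) ∈ (N.E.erase (u, v)).erase (a, u) :=
    (Multiset.mem_erase_of_ne (by simp [hau.symm])).2 hw
  have h₄ : (c, v) ∈ ((N.E.erase (u, v)).erase (a, u)).erase (u, w) := by
    rwa [Multiset.mem_erase_of_ne (by simp [hwv.symm]),
      Multiset.mem_erase_of_ne (by simp [huv.symm])]
  have h₅ : (v, z) ∈ (((N.E.erase (u, v)).erase (a, u)).erase (u, w)).erase (c, v) := by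
    rwa [Multiset.mem_erase_of_ne (by simp [hcv.symm]),
      Multiset.mem_erase_of_ne (by simp [huv.symm]), Multiset.mem_erase_of_ne (by simp [hav.symm]),
      Multiset.mem_erase_of_ne (by simp [huv.symm])]
  rw [snprMinusResult, if_neg huc, add_right_comm]
  congr 1
  simp only [Multiset.insert_eq_cons, Multiset.add_cons]
  rw [add_comm, Multiset.singleton_add, Multiset.cons_erase h₅, Multiset.cons_erase h₄,
    Multiset.cons_erase h₃, Multiset.cons_erase h₂, Multiset.cons_erase he]

lemma inDeg_eq_of_E_add_eq {M : RawNet n} {D A : Multiset (ℕ × ℕ)} (h : M.E + D = N.E + A)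
    {y : ℕ} (hy : D.countP (·.2 = y) = A.countP (·.2 = y)) : M.inDeg y = N.inDeg y := by
  have := congrArg (Multiset.countP (·.2 = y)) h
  rw [Multiset.countP_add, Multiset.countP_add, hy] at this
  simpa only [inDeg, Multiset.countP_eq_card_filter] using Nat.add_right_cancel this

lemma TreeChild.not_isRet_of_mem_erase_of_isRet (hN : N.IsPhylo) (htc : N.TreeChild)
    {u v w : ℕ} (he : (u, v) ∈ N.E) (hv : N.IsRet v) (hw : (u, w) ∈ N.E.erase (u, v)) :
    ¬ N.IsRet w :=
  htc.not_isRet_of_forall_child (hN.edge_mem _ he).1 (Multiset.mem_of_mem_erase hw) fun _ hy =>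
    (eq_or_eq_of_outDeg_eq_two (htc.inDeg_eq_one_and_outDeg_eq_two_of_isRet hN he hv).2 he hw
      hy).elim (fun h => .inr (h ▸ hv)) .inl

lemma TreeChild.not_isRet_of_isRet_parent (hN : N.IsPhylo) (htc : N.TreeChild) {v z : ℕ}
    (hz : (v, z) ∈ N.E) (hv : N.IsRet v) : ¬ N.IsRet z :=
  have hvV := (hN.edge_mem _ hz).1
  htc.not_isRet_of_forall_child hvV hz fun _ hy =>
    .inl (eq_of_outDeg_eq_one (hN.outDeg_eq_one_of_isRet hvV hv) hz hy)

lemma TreeChild.ne_of_mem_erase_of_isRet (hN : N.IsPhylo) (htc : N.TreeChild) {u v c : ℕ}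
    (he : (u, v) ∈ N.E) (hv : N.IsRet v) (hc : (c, v) ∈ N.E.erase (u, v)) : u ≠ c := by
  rintro rfl
  exact htc.not_isRet_of_mem_erase_of_isRet hN he hv hc hv

lemma TreeChild.snprMinusResult_E_add (hN : N.IsPhylo) (htc : N.TreeChild) {u v a w c z : ℕ}
    (he : (u, v) ∈ N.E) (hv : N.IsRet v) (ha : (a, u) ∈ N.E) (hw : (u, w) ∈ N.E.erase (u, v))
    (hc : (c, v) ∈ N.E.erase (u, v)) (hz : (v, z) ∈ N.E) :
    (N.snprMinusResult u v a w c z).E + {(u, v), (a, u), (u, w), (c, v), (v, z)} =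
      N.E + {(a, w), (c, z)} :=
  snprMinusResult_E_add_of_ne (htc.ne_of_mem_erase_of_isRet hN he hv hc) (hN.ne_of_mem_E he)
    (hN.ne_of_mem_E ha) (by rintro rfl; exact hN.swap_notMem_E he ha)
    (fun h => htc.not_isRet_of_mem_erase_of_isRet hN he hv hw (h ▸ hv))
    (hN.ne_of_mem_E (Multiset.mem_of_mem_erase hc)) he ha hw hc hz

lemma TreeChild.snprMinusResult (hN : N.IsPhylo) (htc : N.TreeChild) {u v a w c z : ℕ}
    (he : (u, v) ∈ N.E) (hv : N.IsRet v) (ha : (a, u) ∈ N.E) (hw : (u, w) ∈ N.E.erase (u, v))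
    (hc : (c, v) ∈ N.E.erase (u, v)) (hz : (v, z) ∈ N.E) :
    (N.snprMinusResult u v a w c z).TreeChild := by
  have hE := htc.snprMinusResult_E_add hN he hv ha hw hc hz
  have hwR := htc.not_isRet_of_mem_erase_of_isRet hN he hv hw
  have hzR := htc.not_isRet_of_isRet_parent hN hz hv
  have hwv : w ≠ v := fun h => hwR (h ▸ hv)
  have hwu : w ≠ u := (hN.ne_of_mem_E (Multiset.mem_of_mem_erase hw)).symm
  have hzv : z ≠ v := (hN.ne_of_mem_E hz).symm
  have hzu : z ≠ u := by rintro rfl; exact hN.swap_notMem_E he hz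
  set M := N.snprMinusResult u v a w c z
  have hRet : ∀ y, y ≠ u → y ≠ v → (M.IsRet y ↔ N.IsRet y) := fun y hyu hyv => by
    unfold IsRet
    rw [inDeg_eq_of_E_add_eq hE]
    simp [← Multiset.cons_zero, Multiset.countP_cons, hyu.symm, hyv.symm]
  have hmemM : ∀ g ∈ N.E + {(a, w), (c, z)}, g ∉ ({(u, v), (a, u), (u, w), (c, v), (v, z)} :
      Multiset (ℕ × ℕ)) → g ∈ M.E := fun g hg hgD =>
    (Multiset.mem_add.1 (hE ▸ hg)).resolve_right hgD
  intro x hx hout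
  simp only [M, snprMinusResult_V, Finset.mem_erase] at hx
  obtain ⟨hxv, hxu, hxV⟩ := hx
  by_cases hxa : x = a
  · subst hxa
    exact ⟨w, hmemM _ (by simp) (by simp [hxu, hxv, hwu, hwv]), mt (hRet w hwu hwv).1 hwR⟩
  by_cases hxc : x = c
  · subst hxc
    exact ⟨z, hmemM _ (by simp) (by simp [hxu, hzu, hzv, hxv]), mt (hRet z hzu hzv).1 hzR⟩
  obtain ⟨y, hy⟩ := exists_child hout
  have hxy : (x, y) ∈ N.E := by
    have := hE ▸ Multiset.mem_add.2 (.inl hy)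
    simpa [hxa, hxc] using this
  obtain ⟨y', hy', hy'R⟩ := htc x hxV (outDeg_pos hxy)
  have hy'u : y' ≠ u := by
    rintro rfl
    exact hxa (eq_of_inDeg_eq_one (htc.inDeg_eq_one_and_outDeg_eq_two_of_isRet hN he hv).1 ha hy')
  have hy'v : y' ≠ v := by
    rintro rfl
    exact (eq_or_eq_of_inDeg_eq_two hv he hc hy').elim hxu hxc
  exact ⟨y', hmemM _ (Multiset.mem_add.2 (.inl hy')) (by simp [hxu, hxa, hxc, hxv]),
    mt (hRet y' hy'u hy'v).1 hy'R⟩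

lemma IsPhylo.card_filter_isRet_snd (hN : N.IsPhylo) :
    (N.E.filter fun e => N.IsRet e.2).card = 2 * N.numRet := by
  have hheads :
      (N.E.filter fun e => N.IsRet e.2).card = ((N.E.map Prod.snd).filter N.IsRet).card := by
    rw [Multiset.filter_map, Multiset.card_map]
    rfl
  have hsub : ∀ v ∈ (N.E.map Prod.snd).filter N.IsRet, v ∈ N.V.filter N.IsRet := by
    intro v hv
    obtain ⟨hv, hR⟩ := Multiset.mem_filter.1 hv
    obtain ⟨e, he, rfl⟩ := Multiset.mem_map.1 hv
    exact Finset.mem_filter.2 ⟨(hN.edge_mem e he).2, hR⟩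
  rw [hheads, ← Multiset.sum_count_eq_card hsub, numRet, Finset.card_eq_sum_ones, Finset.mul_sum]
  refine Finset.sum_congr rfl fun v hv => ?_
  have hR : N.IsRet v := (Finset.mem_filter.1 hv).2
  rw [Multiset.count_filter_of_pos hR, Multiset.count_map, mul_one, ← show N.inDeg v = 2 from hR]
  exact congrArg _ (Multiset.filter_congr fun _ _ => eq_comm)

lemma TreeChild.snprMinusTcCond_iff (hN : N.IsPhylo) (htc : N.TreeChild) {e : ℕ × ℕ}
    (he : e ∈ N.E) : N.SNPRminusTcCond e ↔ N.IsRet e.2 := by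
  refine ⟨fun h => h.1, fun hv => ?_⟩
  obtain ⟨u, v⟩ := e
  obtain ⟨hu1, hu2⟩ := htc.inDeg_eq_one_and_outDeg_eq_two_of_isRet hN he hv
  obtain ⟨a, ha⟩ := exists_parent (hu1 ▸ one_pos)
  obtain ⟨w, hw⟩ := exists_other_child hu2 he
  obtain ⟨c, hc⟩ := exists_other_parent hv he
  obtain ⟨z, hz⟩ := exists_child
    ((hN.outDeg_eq_one_of_isRet (hN.edge_mem _ he).2 hv).symm ▸ one_pos)
  exact ⟨hv, by simp [IsRet, hu1], a, w, c, z, ha, hw, hc, hz,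
    htc.snprMinusResult hN he hv ha hw hc hz⟩

end RawNet

theorem numSNPRminusTc_eq_general (n : ℕ) (N : RawNet n)
    (hN : N.IsPhylo) (htc : N.TreeChild) :
    N.numSNPRminusTc = 2 * N.numRet ∧
    ∀ e ∈ N.E, N.IsRet e.2 → ¬ N.IsRet e.1 →
      ∀ a w c z, (a, e.1) ∈ N.E → (e.1, w) ∈ N.E.erase e → (c, e.2) ∈ N.E.erase e →
        (e.2, z) ∈ N.E → (N.snprMinusResult e.1 e.2 a w c z).TreeChild := by
  refine ⟨?_, fun e he hv _ a w c z ha hw hc hz => htc.snprMinusResult hN he hv ha hw hc hz⟩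
  rw [RawNet.numSNPRminusTc, Multiset.filter_congr fun e he => htc.snprMinusTcCond_iff hN he]
  exact hN.card_filter_isRet_snd

/-- The number of tree-child respecting SNPR− operations on a tree-child
network `N` with `r` reticulations equals `2r`; that is, deleting any of the `2r`
reticulation edges (and suppressing the two resulting degree-two vertices) yields a
tree-child network. -/
theorem numSNPRminusTc_eq (n : ℕ) (hn : 2 ≤ n) (N : RawNet n)
    (hN : N.IsPhylo) (htc : N.TreeChild) :
    N.numSNPRminusTc = 2 * N.numRet ∧
    ∀ e ∈ N.E, N.IsRet e.2 → ¬ N.IsRet e.1 →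
      ∀ a w c z, (a, e.1) ∈ N.E → (e.1, w) ∈ N.E.erase e → (c, e.2) ∈ N.E.erase e →
        (e.2, z) ∈ N.E → (N.snprMinusResult e.1 e.2 a w c z).TreeChild :=
  numSNPRminusTc_eq_general n N hN htc
end
end
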